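/- Let (C_β) be a global square sequence with associated function n, and let β be a singular limit ordinal. Then on lim(C_β) ∩ β the map γ ↦ ot(C_γ) equals γ ↦ ot(C_β ∩ γ) and is strictly increasing and continuous (it sends suprema that lie in lim(C_β) ∩ β to suprema). Consequently, if D is a closed subset of lim(C_β) ∩ β and Ē is a closed subset of {ot(C_γ) : γ ∈ D}, then D₀ = {γ ∈ D : ot(C_γ) ∈ Ē} is closed with order type equal to that of Ē; and if moreover every δ ∈ Ē is a singular limit ordinal with n(δ) ≥ k, then every γ ∈ D₀ satisfies n(γ) ≥ k+1. -/

import Mathlib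

open Set

/-- The order type of a set of ordinals: the unique ordinal `o` such that
`Set.Iio o` is order-isomorphic to `X` (or `0` if no such ordinal exists,
which can only happen for proper-class-sized `X`). -/
noncomputable def otype.{u} (X : Set Ordinal.{u}) : Ordinal.{u} :=
  sInf {o : Ordinal.{u} | Nonempty (Set.Iio o ≃o X)}

/-- A set (or class) of ordinals is closed if it contains the supremum of every
nonempty bounded-above subset of itself. -/
def IsClosedSet (C : Set Ordinal) : Prop :=
  ∀ s : Set Ordinal, s ⊆ C → s.Nonempty → BddAbove s → sSup s ∈ C

/-- `limPts X` is the class of limit ordinals `γ` with `sup (X ∩ γ) = γ`. -/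
def limPts (X : Set Ordinal) : Set Ordinal :=
  {γ | Order.IsSuccLimit γ ∧ sSup (X ∩ Set.Iio γ) = γ}

/-- An ordinal is singular if it is a limit ordinal whose cofinality is smaller
than itself. -/
def IsSing (β : Ordinal) : Prop := Order.IsSuccLimit β ∧ β.cof.ord < β

/-- `X` is a closed unbounded subset of the ordinal `β`. -/
def IsClubIn (X : Set Ordinal) (β : Ordinal) : Prop :=
  X ⊆ Set.Iio β ∧
    (∀ s : Set Ordinal, s ⊆ X → s.Nonempty → sSup s < β → sSup s ∈ X) ∧
    ∀ η < β, ∃ x ∈ X, η < x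

/-- A global square sequence. -/
structure GlobalSquare where
  C : Ordinal → Set Ordinal
  club : ∀ β, IsSing β → IsClubIn (C β) β
  ot_lt : ∀ β, IsSing β → otype (C β) < β
  coh : ∀ β, IsSing β → ∀ γ ∈ limPts (C β), γ < β →
    IsSing γ ∧ C γ = C β ∩ Set.Iio γ

/-- `ν` is the function `n` associated to the global square sequence `S`. -/
def IsAssocFn (S : GlobalSquare) (ν : Ordinal → ℕ) : Prop :=
  open scoped Classical in
  ∀ β, IsSing β →
    ν β = if IsSing (otype (S.C β)) then ν (otype (S.C β)) + 1 else 0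

/-- Iterated cardinal successor: `succIt α k = α⁺...⁺` (`k` times). -/
noncomputable def succIt (α : Cardinal) : ℕ → Cardinal
  | 0 => α
  | k + 1 => Order.succ (succIt α k)

/-- An ordinal which is (the ordinal of) a regular cardinal. -/
def IsRegOrd (α : Ordinal) : Prop := ∃ κ : Cardinal, κ.IsRegular ∧ α = κ.ord

/-- End-extension ordering: `EndExt p q` means `p ≤ q`, i.e. `p` end-extends `q`. -/
def EndExt (p q : Set Ordinal) : Prop :=
  q ⊆ p ∧ ∀ x ∈ p \ q, ∀ y ∈ q, y < x

/-- The class forcing associated to a square sequence with associated function `ν`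
and `k ∈ ℕ`: nonempty closed bounded sets of ordinals all of whose elements are
regular cardinals or singular of `ν`-value at least `k+1`. -/
def Pforcing (ν : Ordinal → ℕ) (k : ℕ) : Set (Set Ordinal) :=
  {p | p.Nonempty ∧ IsClosedSet p ∧ BddAbove p ∧
    ∀ α ∈ p, IsRegOrd α ∨ (IsSing α ∧ k + 1 ≤ ν α)}

/-! For any set `X` of ordinals, `γ ↦ otype (X ∩ Iio γ)` is monotone, continuous, and
strictly increasing across each point of `X`. Below a bound `b`, `X` agrees with the range
of the strictly increasing enumeration `f` of the unbounded set `X ∪ Ici b`, and for such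
`f` one has `i < otype (range f ∩ Iio γ) ↔ f i < γ`, from which all three properties are
read off.

By coherence `C γ = C β ∩ γ` for `γ ∈ lim(C β) ∩ β`, so there `γ ↦ ot(C γ)` is this
function for `X = C β`, and two limit points of `C β` are separated by a point of `C β`.
Pulling a closed set back along a monotone continuous map gives a closed set, and a strictly
increasing map is an order isomorphism onto its image, which gives the claims about `D₀`. -/

universe u

theorem Ordinal.eq_of_orderIso_Iio {a b : Ordinal} (e : Iio a ≃o Iio b) : a = b := by
  have := e.toRelIsoLT.ordinalType_congr
  rwa [Ordinal.type_lt_Iio, Ordinal.type_lt_Iio, Ordinal.lift_inj] at this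

theorem otype_eq_of_orderIso {X : Set Ordinal} {o : Ordinal} (e : Iio o ≃o X) : otype X = o := by
  unfold otype
  exact le_antisymm (csInf_le' ⟨e⟩)
    (le_csInf ⟨o, ⟨e⟩⟩ fun _ ⟨e'⟩ => (Ordinal.eq_of_orderIso_Iio (e.trans e'.symm)).le)

theorem otype_congr {X Y : Set Ordinal} (e : X ≃o Y) : otype X = otype Y := by
  unfold otype
  congr 1
  ext o
  exact ⟨fun ⟨e'⟩ => ⟨e'.trans e⟩, fun ⟨e'⟩ => ⟨e'.trans e.symm⟩⟩

theorem StrictMonoOn.otype_image_Iio {f : Ordinal → Ordinal} {o : Ordinal}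
    (hf : StrictMonoOn f (Iio o)) : otype (f '' Iio o) = o :=
  otype_eq_of_orderIso (hf.orderIso f (Iio o))

theorem StrictMono.lt_otype_range_inter_Iio_iff {f : Ordinal → Ordinal} (hf : StrictMono f)
    {γ i : Ordinal} : i < otype (range f ∩ Iio γ) ↔ f i < γ := by
  obtain ⟨c, hc⟩ := ((isLowerSet_Iio γ).preimage hf.monotone).eq_univ_or_Iio.resolve_left
    fun h => (hf.id_le γ).not_gt (h.symm ▸ mem_univ γ : γ ∈ f ⁻¹' Iio γ)
  rw [← image_preimage_eq_range_inter, hc, (hf.strictMonoOn _).otype_image_Iio, ← mem_Iio,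
    ← hc, mem_preimage, mem_Iio]

theorem exists_strictMono_range_inter_Iio_eq (X : Set Ordinal.{u}) (b : Ordinal.{u}) :
    ∃ f : Ordinal.{u} → Ordinal.{u}, StrictMono f ∧ ∀ γ ≤ b, range f ∩ Iio γ = X ∩ Iio γ := by
  have hunb : ¬BddAbove (X ∪ Ici b) := fun h => not_bddAbove_Ici b (h.mono subset_union_right)
  refine ⟨Ordinal.enumOrd (X ∪ Ici b), Ordinal.enumOrd_strictMono hunb, fun γ hγ => ?_⟩
  rw [Ordinal.range_enumOrd hunb, union_inter_distrib_right, Ici_inter_Iio,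
    Ico_eq_empty hγ.not_gt, union_empty]

theorem monotone_otype_inter_Iio (X : Set Ordinal) : Monotone fun γ => otype (X ∩ Iio γ) := by
  intro γ γ' h
  obtain ⟨f, hf, hfX⟩ := exists_strictMono_range_inter_Iio_eq X γ'
  simp only [← hfX γ h, ← hfX γ' le_rfl]
  exact le_of_forall_lt fun i hi => hf.lt_otype_range_inter_Iio_iff.2
    ((hf.lt_otype_range_inter_Iio_iff.1 hi).trans_le h)

theorem otype_inter_Iio_lt_of_mem {X : Set Ordinal} {x γ γ' : Ordinal} (hx : x ∈ X)
    (hγx : γ ≤ x) (hxγ' : x < γ') : otype (X ∩ Iio γ) < otype (X ∩ Iio γ') := by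
  obtain ⟨f, hf, hfX⟩ := exists_strictMono_range_inter_Iio_eq X γ'
  rw [← hfX _ (hγx.trans hxγ'.le), ← hfX γ' le_rfl]
  obtain ⟨⟨i, rfl⟩, -⟩ : x ∈ range f ∩ Iio γ' := hfX γ' le_rfl ▸ ⟨hx, hxγ'⟩
  calc otype (range f ∩ Iio γ) ≤ i :=
        not_lt.1 fun h => (hf.lt_otype_range_inter_Iio_iff.1 h).not_ge hγx
    _ < otype (range f ∩ Iio γ') := hf.lt_otype_range_inter_Iio_iff.2 hxγ'

theorem otype_inter_Iio_csSup {X s : Set Ordinal} (hne : s.Nonempty) (hbdd : BddAbove s) :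
    otype (X ∩ Iio (sSup s)) = sSup ((fun γ => otype (X ∩ Iio γ)) '' s) := by
  obtain ⟨f, hf, hfX⟩ := exists_strictMono_range_inter_Iio_eq X (sSup s)
  refine eq_of_forall_lt_iff fun i => ?_
  rw [lt_csSup_iff ((monotone_otype_inter_Iio X).map_bddAbove hbdd) (hne.image _),
    exists_mem_image, ← hfX _ le_rfl, hf.lt_otype_range_inter_Iio_iff, lt_csSup_iff hbdd hne]
  refine exists_congr fun γ => and_congr_right fun hγ => ?_
  rw [← hfX γ (le_csSup hbdd hγ), hf.lt_otype_range_inter_Iio_iff]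

theorem exists_mem_Ioo_of_mem_limPts {X : Set Ordinal} {γ γ' : Ordinal} (hγ' : γ' ∈ limPts X)
    (h : γ < γ') : ∃ x ∈ X, γ < x ∧ x < γ' := by
  obtain ⟨x, ⟨hxX, hxγ'⟩, hγx⟩ := exists_lt_of_lt_csSup' (h.trans_eq hγ'.2.symm)
  exact ⟨x, hxX, hγx, hxγ'⟩

theorem IsClosedSet.sep_apply_mem {D E : Set Ordinal} {f : Ordinal → Ordinal}
    (hD : IsClosedSet D) (hE : IsClosedSet E) (hf : MonotoneOn f D)
    (hcont : ∀ s ⊆ D, s.Nonempty → sSup s ∈ D → f (sSup s) = sSup (f '' s)) :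
    IsClosedSet {γ ∈ D | f γ ∈ E} := by
  intro s hs hne hbdd
  have hsD : s ⊆ D := fun γ hγ => (hs hγ).1
  have hsup : sSup s ∈ D := hD s hsD hne hbdd
  refine ⟨hsup, ?_⟩
  rw [hcont s hsD hne hsup]
  refine hE _ (image_subset_iff.2 fun γ hγ => (hs hγ).2) (hne.image f) ⟨f (sSup s), ?_⟩
  rintro _ ⟨γ, hγ, rfl⟩
  exact hf (hsD hγ) hsup (le_csSup hbdd hγ)

theorem StrictMonoOn.otype_sep_apply_mem {D E : Set Ordinal} {f : Ordinal → Ordinal}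
    (hf : StrictMonoOn f D) (hE : E ⊆ f '' D) : otype {γ ∈ D | f γ ∈ E} = otype E :=
  otype_congr <| ((hf.mono (sep_subset D _)).orderIso f _).trans <|
    OrderIso.setCongr _ _ ((image_inter_preimage f D E).trans (inter_eq_right.2 hE))

/-- `γ ↦ ot (C γ)` is strictly increasing and continuous
on the limit points of `C β`, and its effect on closed sets and on `n`. -/
theorem otype_strictMono_continuous_on_limPts (S : GlobalSquare)
    (ν : Ordinal → ℕ) (hν : IsAssocFn S ν)
    (β : Ordinal) (hβ : IsSing β) :
    (∀ γ ∈ limPts (S.C β) ∩ Set.Iio β,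
      otype (S.C γ) = otype (S.C β ∩ Set.Iio γ)) ∧
    StrictMonoOn (fun γ => otype (S.C γ)) (limPts (S.C β) ∩ Set.Iio β) ∧
    (∀ s : Set Ordinal, s ⊆ limPts (S.C β) ∩ Set.Iio β → s.Nonempty →
      sSup s ∈ limPts (S.C β) ∩ Set.Iio β →
      otype (S.C (sSup s)) = sSup ((fun γ => otype (S.C γ)) '' s)) ∧
    ∀ D : Set Ordinal, D ⊆ limPts (S.C β) ∩ Set.Iio β → IsClosedSet D →
      ∀ E : Set Ordinal, E ⊆ (fun γ => otype (S.C γ)) '' D → IsClosedSet E →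
        IsClosedSet {γ ∈ D | otype (S.C γ) ∈ E} ∧
        otype {γ ∈ D | otype (S.C γ) ∈ E} = otype E ∧
        ∀ k : ℕ, (∀ δ ∈ E, IsSing δ ∧ k ≤ ν δ) →
          ∀ γ ∈ {γ ∈ D | otype (S.C γ) ∈ E}, k + 1 ≤ ν γ := by
  have hcoh : ∀ γ ∈ limPts (S.C β) ∩ Iio β, IsSing γ ∧ S.C γ = S.C β ∩ Iio γ :=
    fun γ hγ => S.coh β hβ γ hγ.1 hγ.2
  have hot : ∀ γ ∈ limPts (S.C β) ∩ Iio β, otype (S.C γ) = otype (S.C β ∩ Iio γ) :=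
    fun γ hγ => by rw [(hcoh γ hγ).2]
  have hmono : StrictMonoOn (fun γ => otype (S.C γ)) (limPts (S.C β) ∩ Iio β) := by
    intro γ hγ γ' hγ' h
    obtain ⟨x, hx, hγx, hxγ'⟩ := exists_mem_Ioo_of_mem_limPts hγ'.1 h
    simp only [hot γ hγ, hot γ' hγ']
    exact otype_inter_Iio_lt_of_mem hx hγx.le hxγ'
  have hcont : ∀ s ⊆ limPts (S.C β) ∩ Iio β, s.Nonempty →
      sSup s ∈ limPts (S.C β) ∩ Iio β →
      otype (S.C (sSup s)) = sSup ((fun γ => otype (S.C γ)) '' s) := by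
    intro s hs hne hsup
    rw [hot _ hsup, otype_inter_Iio_csSup hne ⟨β, fun γ hγ => (hs hγ).2.le⟩,
      image_congr fun γ hγ => hot γ (hs hγ)]
  refine ⟨hot, hmono, hcont, fun D hD hDcl E hE hEcl => ⟨?_, ?_, ?_⟩⟩
  · exact hDcl.sep_apply_mem hEcl (hmono.mono hD).monotoneOn
      fun s hs hne hsup => hcont s (hs.trans hD) hne (hD hsup)
  · exact (hmono.mono hD).otype_sep_apply_mem hE
  · rintro k hk γ ⟨hγD, hγE⟩
    rw [hν γ (hcoh γ (hD hγD)).1, if_pos (hk _ hγE).1]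
    exact Nat.succ_le_succ (hk _ hγE).2
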